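/- Let T be a finite rooted tree with Boolean inlinability labels and suppose all nodes except the root are inlinable. Then the two-queue traversal dequeues only the root from q, and the auxiliary queue r processes all other n-1 nodes; hence exactly one tuple is produced. Dually, if no node is inlinable, every node is dequeued from q and n tuples are produced. -/

import Mathlib

/-- A finite rooted tree with Boolean inlinability labels; the root is non-inlinable.
    Acyclicity is enforced by a depth function. -/
structure RTree (V : Type) [Fintype V] [DecidableEq V] where
  root : V
  parent : V → Option V
  inlinable : V → Bool
  root_parent : parent root = none
  parent_of_ne : ∀ v, v ≠ root → (parent v).isSome
  depth : V → ℕ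
  depth_root : depth root = 0
  depth_parent : ∀ v p, parent v = some p → depth v = depth p + 1
  root_not_inlinable : inlinable root = false

namespace RTree

/-- Events of the two-queue traversal. -/
inductive Event (V : Type) where
  | deqQ : V → Event V
  | deqR : V → Event V
  | enqQ : V → Event V
  | enqR : V → Event V
  deriving DecidableEq

variable {V : Type} [Fintype V] [DecidableEq V] (T : RTree V)

/-- The children of a node, as a list. -/
noncomputable def children (v : V) : List V :=
  (Finset.univ.filter (fun w => T.parent w = some v)).toList

/-- One run of the two-queue traversal with the given fuel, starting from the state
    `(q, r)`.  Dequeues from the auxiliary queue `r` take priority (the inner loop);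
    dequeuing an inlinable node from `r` enqueues its children into `r`, dequeuing a
    non-inlinable node from `r` enqueues it into `q`; when `r` is empty, a node is
    dequeued from `q` and its children are enqueued into `r`.  Returns the event
    trace together with the final state. -/
noncomputable def run (T : RTree V) : ℕ → List V × List V → List (Event V) × (List V × List V)
  | 0, s => ([], s)
  | fuel+1, (q, f :: r) =>
      if T.inlinable f then
        let res := run T fuel (q, r ++ T.children f)
        (Event.deqR f :: ((T.children f).map Event.enqR ++ res.1), res.2)
      else
        let res := run T fuel (q ++ [f], r)
        (Event.deqR f :: Event.enqQ f :: res.1, res.2)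
  | fuel+1, (e :: q, []) =>
      let res := run T fuel (q, T.children e)
      (Event.deqQ e :: ((T.children e).map Event.enqR ++ res.1), res.2)
  | _+1, ([], []) => ([], ([], []))

/-- `a` is a (proper-or-self) ancestor of `v` after `k` parent steps. -/
def parentIter (T : RTree V) : ℕ → V → Option V
  | 0, v => some v
  | k+1, v => (T.parent v).bind (parentIter T k)

/-- `a` is a strict ancestor of `v`. -/
def StrictAncestor (a v : V) : Prop := ∃ k, 1 ≤ k ∧ T.parentIter k v = some a

end RTree


namespace RTree

/-- Whether an event is a dequeue from the main queue `q`. -/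
def Event.isDeqQ {V : Type} : Event V → Bool
  | .deqQ _ => true
  | _ => false

/-- Whether an event is a dequeue from the auxiliary queue `r`. -/
def Event.isDeqR {V : Type} : Event V → Bool
  | .deqR _ => true
  | _ => false

/-- Whether an event is an enqueue into the auxiliary queue `r`. -/
def Event.isEnqR {V : Type} : Event V → Bool
  | .enqR _ => true
  | _ => false

end RTree

/-!
Two invariants hold for every labelling. A non-inlinable node leaves `r` only to enter `q`, so
the number of `q`-dequeues of `v` is its number of occurrences in `q`, plus its number of
`r`-dequeues when `v` is not inlinable. And every entry `x` of `q ++ r` causes one `r`-dequeue of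
each descendant-or-self `v` of `x`, except of `x` itself when it sits in `q`: when `x` is dequeued,
this count passes to its children through `[x = v] + #{children c of x above v} = [x above v]`,
where uniqueness of the child comes from the depth function. From `([root], [])` every non-root
node is thus dequeued from `r` exactly once, and a node is dequeued from `q` exactly once if it is
the root or not inlinable, and never otherwise. The two extreme labellings are special cases.
-/

theorem List.countP_eq_sum_count {α β : Type*} [Fintype β] [DecidableEq α] {f : β → α}
    (hf : Function.Injective f) {p : α → Bool} (hp : ∀ a, p a ↔ a ∈ Set.range f)
    (l : List α) : l.countP p = ∑ b, l.count (f b) := by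
  induction l with
  | nil => simp
  | cons a l ih =>
    simp only [List.countP_cons, List.count_cons, Finset.sum_add_distrib, ih, add_right_inj]
    by_cases ha : p a
    · obtain ⟨b, rfl⟩ := (hp _).1 ha
      simp only [ha, if_true]
      rw [Finset.sum_eq_single b (fun c _ hc => by simp [hf.ne (Ne.symm hc)]) (by simp)]
      simp
    · have : ∀ b, a ≠ f b := fun b hb => ha ((hp a).2 ⟨b, hb.symm⟩)
      simp [ha, this]

namespace RTree.Event

variable {V : Type}

@[simp]
theorem count_deqQ_map_enqR [DecidableEq V] (l : List V) (v : V) :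
    (l.map enqR).count (.deqQ v) = 0 :=
  List.count_eq_zero.2 (by simp)

@[simp]
theorem count_deqR_map_enqR [DecidableEq V] (l : List V) (v : V) :
    (l.map enqR).count (.deqR v) = 0 :=
  List.count_eq_zero.2 (by simp)

theorem countP_isDeqQ [Fintype V] [DecidableEq V] (l : List (Event V)) :
    l.countP isDeqQ = ∑ v, l.count (.deqQ v) :=
  List.countP_eq_sum_count (fun _ _ h => deqQ.inj h) (fun e => by cases e <;> simp [isDeqQ]) l

theorem countP_isDeqR [Fintype V] [DecidableEq V] (l : List (Event V)) :
    l.countP isDeqR = ∑ v, l.count (.deqR v) :=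
  List.countP_eq_sum_count (fun _ _ h => deqR.inj h) (fun e => by cases e <;> simp [isDeqR]) l

end RTree.Event

namespace RTree

variable {V : Type} [Fintype V] [DecidableEq V] {T : RTree V}

variable (T) in
def Ancestor (x v : V) : Prop :=
  Relation.ReflTransGen (fun p c => T.parent c = some p) x v

theorem Ancestor.refl (v : V) : T.Ancestor v v := Relation.ReflTransGen.refl

theorem Ancestor.depth_le {x v : V} (h : T.Ancestor x v) : T.depth x ≤ T.depth v := by
  induction h with
  | refl => rfl
  | tail _ hp ih => have := T.depth_parent _ _ hp; omega

theorem Ancestor.depth_lt {x v : V} (h : T.Ancestor x v) (hne : x ≠ v) :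
    T.depth x < T.depth v := by
  rcases (Relation.ReflTransGen.cases_tail_iff _ _ _).1 h with rfl | ⟨p, hxp, hp⟩
  · exact absurd rfl hne
  · have := T.depth_parent _ _ hp
    have := Ancestor.depth_le hxp
    omega

theorem Ancestor.eq_of_depth_eq {a b v : V} (ha : T.Ancestor a v) (hb : T.Ancestor b v)
    (hd : T.depth a = T.depth b) : a = b := by
  induction ha generalizing b with
  | refl => by_contra hne; exact (hb.depth_lt (Ne.symm hne)).ne hd.symm
  | tail hap hp ih =>
    rcases (Relation.ReflTransGen.cases_tail_iff _ _ _).1 hb with rfl | ⟨p', hbp', hp'⟩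
    · have := T.depth_parent _ _ hp
      have := Ancestor.depth_le hap
      omega
    · obtain rfl := Option.some_injective _ (hp'.symm.trans hp)
      exact ih hbp' hd

variable (T) in
theorem ancestor_root (v : V) : T.Ancestor T.root v := by
  by_cases hv : v = T.root
  · rw [hv]; exact .refl _
  obtain ⟨p, hp⟩ := Option.isSome_iff_exists.mp (T.parent_of_ne v hv)
  have : T.depth p < T.depth v := by rw [T.depth_parent v p hp]; omega
  exact (ancestor_root p).tail hp
termination_by T.depth v

open Classical in
theorem countP_children_ancestor (x v : V) :
    (T.children x).countP (T.Ancestor · v) + (if x = v then 1 else 0) =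
      if T.Ancestor x v then 1 else 0 := by
  rw [children, ← Multiset.coe_countP, Finset.coe_toList, Multiset.countP_eq_card_filter,
    ← Finset.filter_val, Finset.filter_filter, ← Finset.card_def]
  by_cases hvx : x = v
  · subst hvx
    suffices h : (Finset.univ.filter fun c => T.parent c = some x ∧ T.Ancestor c x) = ∅ by
      rw [h, Finset.card_empty, if_pos rfl, if_pos (Ancestor.refl x)]
    refine Finset.filter_false_of_mem fun c _ ⟨hc, hcv⟩ => ?_
    have := hcv.depth_le
    have := T.depth_parent c x hc
    omega
  by_cases hxv : T.Ancestor x v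
  · obtain ⟨c, hc, hcv : T.Ancestor c v⟩ :=
      (Relation.ReflTransGen.cases_head_iff.1 hxv).resolve_left hvx
    suffices h : (Finset.univ.filter fun c => T.parent c = some x ∧ T.Ancestor c v) = {c} by
      simp [h, hvx, hxv]
    refine Finset.eq_singleton_iff_unique_mem.2 ⟨by simp [hc, hcv], fun c' hc' => ?_⟩
    obtain ⟨hc'x, hc'v⟩ := (Finset.mem_filter.1 hc').2
    exact hc'v.eq_of_depth_eq hcv (by rw [T.depth_parent c' x hc'x, T.depth_parent c x hc])
  · suffices h : (Finset.univ.filter fun c => T.parent c = some x ∧ T.Ancestor c v) = ∅ by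
      simp [h, hvx, hxv]
    exact Finset.filter_false_of_mem fun c _ ⟨hc, hcv⟩ => hxv (hcv.head hc)

theorem count_deqQ_run (fuel : ℕ) (q r : List V) (hend : (T.run fuel (q, r)).2 = ([], []))
    (v : V) :
    (T.run fuel (q, r)).1.count (.deqQ v) =
      q.count v + if T.inlinable v then 0 else (T.run fuel (q, r)).1.count (.deqR v) := by
  induction fuel generalizing q r with
  | zero =>
    obtain ⟨rfl, rfl⟩ : q = [] ∧ r = [] := by simpa [run] using hend
    simp [run]
  | succ fuel ih =>
    match q, r with
    | [], [] => simp [run]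
    | q, f :: r =>
      by_cases hf : T.inlinable f
      · simp only [run, hf, if_true] at hend ⊢
        rcases eq_or_ne f v with rfl | hfv
        · simp [ih _ _ hend, hf]
        · simp [ih _ _ hend, hfv]
      · simp only [run, hf, Bool.false_eq_true, if_false] at hend ⊢
        rcases eq_or_ne f v with rfl | hfv
        · simp [ih _ _ hend, hf]
          omega
        · simp [ih _ _ hend, hfv]
    | e :: q, [] =>
      simp only [run] at hend ⊢
      simp [List.count_cons, ih _ _ hend]
      omega

open Classical in
theorem count_deqR_run (fuel : ℕ) (q r : List V) (hend : (T.run fuel (q, r)).2 = ([], []))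
    (v : V) :
    (T.run fuel (q, r)).1.count (.deqR v) + q.count v = (q ++ r).countP (T.Ancestor · v) := by
  induction fuel generalizing q r with
  | zero =>
    obtain ⟨rfl, rfl⟩ : q = [] ∧ r = [] := by simpa [run] using hend
    simp [run]
  | succ fuel ih =>
    match q, r with
    | [], [] => simp [run]
    | q, f :: r =>
      have hanc := countP_children_ancestor (T := T) f v
      by_cases hf : T.inlinable f
      · simp only [run, hf, if_true] at hend ⊢
        have := ih _ _ hend
        simp [List.count_cons, List.countP_append, List.countP_cons] at this ⊢
        omega
      · simp only [run, hf, Bool.false_eq_true, if_false] at hend ⊢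
        have := ih _ _ hend
        simp [List.count_cons, List.countP_append, List.countP_cons] at this ⊢
        omega
    | e :: q, [] =>
      have hanc := countP_children_ancestor (T := T) e v
      simp only [run] at hend ⊢
      have := ih _ _ hend
      simp [List.count_cons, List.countP_append, List.countP_cons] at this ⊢
      omega

theorem count_deqR_of_run_root {fuel : ℕ} {tr : List (Event V)}
    (hrun : T.run fuel ([T.root], []) = (tr, ([], []))) (v : V) :
    tr.count (.deqR v) = if v = T.root then 0 else 1 := by
  have := count_deqR_run fuel [T.root] [] (by rw [hrun]) v
  rw [hrun] at this
  simp only [List.count_singleton, List.append_nil, List.countP_singleton, ancestor_root,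
    decide_true, if_true] at this
  rcases eq_or_ne v T.root with rfl | hv
  · simpa using this
  · simpa [hv, Ne.symm hv] using this

theorem count_deqQ_of_run_root {fuel : ℕ} {tr : List (Event V)}
    (hrun : T.run fuel ([T.root], []) = (tr, ([], []))) (v : V) :
    tr.count (.deqQ v) = if v = T.root ∨ T.inlinable v = false then 1 else 0 := by
  have := count_deqQ_run fuel [T.root] [] (by rw [hrun]) v
  rw [hrun, count_deqR_of_run_root hrun] at this
  rw [this]
  by_cases hv : v = T.root
  · simp [hv, T.root_not_inlinable]
  · cases T.inlinable v <;> simp [hv, Ne.symm hv]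

end RTree

/-- Extreme cases: if all nodes except the root are inlinable, only the root is
dequeued from `q` (so exactly one tuple is produced) and the remaining `n - 1`
nodes are all processed through `r`; dually, if no node is inlinable, every node
is dequeued from `q` and `n` tuples are produced. -/
theorem xinsert_extreme_cases
    {V : Type} [Fintype V] [DecidableEq V] (T : RTree V)
    (fuel : ℕ) (tr : List (RTree.Event V))
    (hrun : RTree.run T fuel ([T.root], []) = (tr, ([], []))) :
    ((∀ v : V, v ≠ T.root → T.inlinable v = true) →
      (∀ v : V, tr.count (RTree.Event.deqQ v) = if v = T.root then 1 else 0) ∧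
      tr.countP RTree.Event.isDeqQ = 1 ∧
      tr.countP RTree.Event.isDeqR = Fintype.card V - 1) ∧
    ((∀ v : V, T.inlinable v = false) →
      (∀ v : V, tr.count (RTree.Event.deqQ v) = 1) ∧
      tr.countP RTree.Event.isDeqQ = Fintype.card V) := by
  have hQ := RTree.count_deqQ_of_run_root hrun
  refine ⟨fun hinl => ?_, fun hinl => ?_⟩
  · have hQ' : ∀ v, tr.count (.deqQ v) = if v = T.root then 1 else 0 := fun v => by
      by_cases hv : v = T.root <;> simp [hQ, hv, hinl]
    refine ⟨hQ', by simp [RTree.Event.countP_isDeqQ, hQ'], ?_⟩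
    simp [RTree.Event.countP_isDeqR, RTree.count_deqR_of_run_root hrun, Finset.sum_ite,
      Finset.filter_ne', Finset.card_erase_of_mem]
  · have hQ' : ∀ v, tr.count (.deqQ v) = 1 := by simp [hQ, hinl]
    exact ⟨hQ', by simp [RTree.Event.countP_isDeqQ, hQ']⟩
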